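/- arXiv:1507.04739 — 2 statements merged into one kernel-verified Lean document; each statement's English description precedes it below -/
import Mathlib

section
/- Let G = (V,E) be a finite simple graph with positive edge weights (θ_e)_{e∈E}, and for z > 0 let y(z) ∈ (0,∞)^{E⃗} be the unique solution of y_{u→v}(z) = z / (1 + ∑_{w ∈ ∂u∖{v}} θ_{wu} y_{w→u}(z)) for all directed edges u→v, and define x_e(z) = θ_e y_{u→v}(z) y_{v→u}(z) / (z + θ_e y_{u→v}(z) y_{v→u}(z)) for each edge e = (uv). Then for every edge e = (uv) and every z > 0, x_e(z)(1 − x_e(z)) / z = θ_e · (1 − ∑_{e' ∋ u} x_{e'}(z)) · (1 − ∑_{e' ∋ v} x_{e'}(z)). -/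
open Finset
open scoped BigOperators Classical

noncomputable section

/-- The finite set of edges of a graph on a finite vertex type. -/
def edgeFS {V : Type*} [Fintype V] (G : SimpleGraph V) : Finset (Sym2 V) :=
  (Set.toFinite G.edgeSet).toFinset

/-- The finite set of neighbours of a vertex. -/
def nbrFS {V : Type*} [Fintype V] (G : SimpleGraph V) (u : V) : Finset V :=
  (Set.toFinite (G.neighborSet u)).toFinset

/-- `M` is (the edge set of) a matching of `G`: a set of pairwise disjoint edges. -/
def IsMatchingF {V : Type*} (G : SimpleGraph V) (M : Finset (Sym2 V)) : Prop :=
  (↑M ⊆ G.edgeSet) ∧ ∀ e ∈ M, ∀ f ∈ M, e ≠ f → ∀ v : V, v ∈ e → v ∉ f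

/-- The weighted matching count `w_k(G) = ∑_{M matching, |M| = k} ∏_{e ∈ M} θ_e`. -/
def wCount {V : Type*} [Fintype V] (G : SimpleGraph V) (θ : Sym2 V → ℝ) (k : ℕ) : ℝ :=
  ∑ M ∈ Finset.univ.filter
      (fun M : Finset (Sym2 V) => IsMatchingF G M ∧ M.card = k),
    ∏ e ∈ M, θ e

/-- The matching number `ν(G) = max {k | w_k(G) > 0}`. -/
def nuW {V : Type*} [Fintype V] (G : SimpleGraph V) (θ : Sym2 V → ℝ) : ℕ :=
  sSup {k : ℕ | 0 < wCount G θ k}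

/-- The weighted matching generating function `P_G(z) = ∑_{k=0}^{ν(G)} w_k(G) z^k`. -/
def PW {V : Type*} [Fintype V] (G : SimpleGraph V) (θ : Sym2 V → ℝ) (z : ℝ) : ℝ :=
  ∑ k ∈ Finset.range (nuW G θ + 1), wCount G θ k * z ^ k

/-- `incSum G x v = ∑_{e ∋ v} x_e`. -/
def incSum {V : Type*} [Fintype V] (G : SimpleGraph V) (x : Sym2 V → ℝ) (v : V) : ℝ :=
  ∑ e ∈ (edgeFS G).filter (fun e => v ∈ e), x e

/-- Membership in the fractional matching polytope `FM(G)`. -/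
def memFM {V : Type*} [Fintype V] (G : SimpleGraph V) (x : Sym2 V → ℝ) : Prop :=
  (∀ e ∈ edgeFS G, 0 ≤ x e) ∧ ∀ v : V, incSum G x v ≤ 1

/-- The fractional matching number `ν*(G) = max_{x ∈ FM(G)} ∑_e x_e`. -/
def nuStar {V : Type*} [Fintype V] (G : SimpleGraph V) : ℝ :=
  sSup {r : ℝ | ∃ x : Sym2 V → ℝ, memFM G x ∧ r = ∑ e ∈ edgeFS G, x e}

/-- The weighted Bethe entropy `S^B_G(x)` (with the convention `0 · ln 0 = 0`, which holds
since `Real.log 0 = 0`). -/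
def SBW {V : Type*} [Fintype V] (G : SimpleGraph V) (θ x : Sym2 V → ℝ) : ℝ :=
  (∑ e ∈ edgeFS G, (x e * Real.log (θ e / x e) + (1 - x e) * Real.log (1 - x e)))
  - ∑ v : V, (1 - incSum G x v) * Real.log (1 - incSum G x v)

/-- `y : V × V → ℝ` is a (positive) solution on directed edges of the message recursion
`y_{u→v} = z / (1 + ∑_{w ∈ ∂u∖{v}} θ_{wu} y_{w→u})`. -/
def MsgFP {V : Type*} [Fintype V] (G : SimpleGraph V) (θ : Sym2 V → ℝ) (z : ℝ)
    (y : V × V → ℝ) : Prop :=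
  ∀ u v : V, G.Adj u v →
    0 < y (u, v) ∧
    y (u, v) = z / (1 + ∑ w ∈ (nbrFS G u).erase v, θ s(w, u) * y (w, u))

/-!
With `S_a = 1 + ∑_{w ∼ a} θ_{wa} y_{w→a}`, the message equation says exactly that
`z + θ_e y_{u→v} y_{v→u} = y_{u→v} S_u` for every edge `e = (uv)`. Hence
`x_{(aw)} = θ_{aw} y_{w→a} / S_a`, so `1 - ∑_{e ∋ a} x_e = 1 / S_a`, while
`x_e (1 - x_e) / z = θ_e y_{u→v} y_{v→u} / (z + θ_e y_{u→v} y_{v→u})²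
  = θ_e y_{u→v} y_{v→u} / (y_{u→v} S_u · y_{v→u} S_v) = θ_e / (S_u S_v)`.
-/

lemma mem_nbrFS {V : Type*} [Fintype V] {G : SimpleGraph V} {u w : V} :
    w ∈ nbrFS G u ↔ G.Adj u w := by
  simp [nbrFS]

lemma incSum_eq_sum_nbrFS {V : Type*} [Fintype V] (G : SimpleGraph V) (x : Sym2 V → ℝ)
    (u : V) : incSum G x u = ∑ w ∈ nbrFS G u, x s(u, w) := by
  have hinc : (edgeFS G).filter (u ∈ ·) = (nbrFS G u).image (fun w => s(u, w)) := by
    ext e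
    induction e using Sym2.inductionOn with
    | hf a b =>
      simp only [mem_filter, mem_image, edgeFS, Set.Finite.mem_toFinset,
        SimpleGraph.mem_edgeSet, mem_nbrFS, Sym2.mem_iff, Sym2.eq_iff]
      constructor
      · rintro ⟨hab, rfl | rfl⟩
        · exact ⟨b, hab, by tauto⟩
        · exact ⟨a, hab.symm, by tauto⟩
      · rintro ⟨w, huw, ⟨rfl, rfl⟩ | ⟨rfl, rfl⟩⟩
        · exact ⟨huw, Or.inl rfl⟩
        · exact ⟨huw.symm, Or.inr rfl⟩
  rw [incSum, hinc, sum_image fun a _ b _ hab => Sym2.congr_right.mp hab]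

lemma div_mul_one_sub_div_div {a z : ℝ} (hz : z ≠ 0) (hza : z + a ≠ 0) :
    a / (z + a) * (1 - a / (z + a)) / z = a / (z + a) ^ 2 := by
  field_simp
  ring

/-- `S_a`: the message denominator at `a` with no incoming message left out. -/
def msgNorm {V : Type*} [Fintype V] (G : SimpleGraph V) (θ : Sym2 V → ℝ) (Y : V × V → ℝ)
    (a : V) : ℝ :=
  1 + ∑ w ∈ nbrFS G a, θ s(w, a) * Y (w, a)

section

variable {V : Type*} [Fintype V] {G : SimpleGraph V} {θ : Sym2 V → ℝ} {z : ℝ}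
  {Y : V × V → ℝ} {x : Sym2 V → ℝ}

lemma msgNorm_pos (hθ : ∀ e ∈ G.edgeSet, 0 < θ e) (hY : MsgFP G θ z Y) (a : V) :
    0 < msgNorm G θ Y a := by
  have hsum : 0 ≤ ∑ w ∈ nbrFS G a, θ s(w, a) * Y (w, a) := by
    refine sum_nonneg fun w hw => ?_
    have hwa : G.Adj w a := (mem_nbrFS.mp hw).symm
    exact (mul_pos (hθ _ hwa) (hY w a hwa).1).le
  unfold msgNorm
  linarith

lemma MsgFP.add_mul_eq_mul_msgNorm (hY : MsgFP G θ z Y) {a b : V} (hab : G.Adj a b) :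
    z + θ s(a, b) * Y (a, b) * Y (b, a) = Y (a, b) * msgNorm G θ Y a := by
  obtain ⟨hpos, heq⟩ := hY a b hab
  set T := ∑ w ∈ (nbrFS G a).erase b, θ s(w, a) * Y (w, a)
  -- a vanishing denominator would force the junk value `Y (a, b) = z / 0 = 0`
  have hT : 1 + T ≠ 0 := fun h => by rw [h, div_zero] at heq; linarith
  have hz : z = Y (a, b) * (1 + T) := by rw [heq]; field_simp
  rw [msgNorm, ← sum_erase_add _ _ (mem_nbrFS.mpr hab), Sym2.eq_swap, hz]
  ring

lemma MsgFP.marginal_eq (hY : MsgFP G θ z Y)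
    (hx : ∀ u v, G.Adj u v → x s(u, v) = θ s(u, v) * Y (u, v) * Y (v, u)
        / (z + θ s(u, v) * Y (u, v) * Y (v, u)))
    {a b : V} (hab : G.Adj a b) :
    x s(a, b) = θ s(b, a) * Y (b, a) / msgNorm G θ Y a := by
  rw [hx a b hab, hY.add_mul_eq_mul_msgNorm hab, Sym2.eq_swap, mul_comm (θ _), mul_assoc,
    mul_div_mul_left _ _ (hY a b hab).1.ne']

lemma MsgFP.one_sub_incSum (hθ : ∀ e ∈ G.edgeSet, 0 < θ e) (hY : MsgFP G θ z Y)
    (hx : ∀ u v, G.Adj u v → x s(u, v) = θ s(u, v) * Y (u, v) * Y (v, u)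
        / (z + θ s(u, v) * Y (u, v) * Y (v, u)))
    (a : V) :
    1 - incSum G x a = 1 / msgNorm G θ Y a := by
  have hS := (msgNorm_pos hθ hY a).ne'
  rw [incSum_eq_sum_nbrFS, sum_congr rfl fun w hw => hY.marginal_eq hx (mem_nbrFS.mp hw),
    ← sum_div, show ∑ w ∈ nbrFS G a, θ s(w, a) * Y (w, a) = msgNorm G θ Y a - 1 by
      rw [msgNorm]; ring]
  field_simp
  ring

theorem MsgFP.marginal_local_identity (hθ : ∀ e ∈ G.edgeSet, 0 < θ e)
    (hY : MsgFP G θ z Y)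
    (hx : ∀ u v, G.Adj u v → x s(u, v) = θ s(u, v) * Y (u, v) * Y (v, u)
        / (z + θ s(u, v) * Y (u, v) * Y (v, u)))
    (hz : 0 < z) {u v : V} (huv : G.Adj u v) :
    x s(u, v) * (1 - x s(u, v)) / z
      = θ s(u, v) * (1 - incSum G x u) * (1 - incSum G x v) := by
  have hYuv := (hY u v huv).1
  have hYvu := (hY v u huv.symm).1
  have hza : 0 < z + θ s(u, v) * Y (u, v) * Y (v, u) := by
    have := hθ s(u, v) huv
    positivity
  have hsq : (z + θ s(u, v) * Y (u, v) * Y (v, u)) ^ 2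
      = Y (u, v) * msgNorm G θ Y u * (Y (v, u) * msgNorm G θ Y v) := by
    have hvu := hY.add_mul_eq_mul_msgNorm huv.symm
    rw [Sym2.eq_swap] at hvu
    rw [sq, ← hvu, ← hY.add_mul_eq_mul_msgNorm huv]
    ring
  rw [hx u v huv, div_mul_one_sub_div_div hz.ne' hza.ne', hsq,
    hY.one_sub_incSum hθ hx, hY.one_sub_incSum hθ hx]
  field_simp

end

/-- The local identity satisfied by the BP marginals: for every edge
`e = (uv)` and `z > 0`,
`x_e(z)(1 − x_e(z))/z = θ_e (1 − ∑_{e' ∋ u} x_{e'}(z)) (1 − ∑_{e' ∋ v} x_{e'}(z))`. -/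
theorem bp_marginals_local_identity {V : Type*} [Fintype V] (G : SimpleGraph V)
    (θ : Sym2 V → ℝ) (hθ : ∀ e ∈ G.edgeSet, 0 < θ e)
    (y : ℝ → V × V → ℝ) (hy : ∀ z : ℝ, 0 < z → MsgFP G θ z (y z))
    (x : ℝ → Sym2 V → ℝ)
    (hx : ∀ z : ℝ, 0 < z → ∀ u v : V, G.Adj u v →
      x z s(u, v) = θ s(u, v) * y z (u, v) * y z (v, u)
        / (z + θ s(u, v) * y z (u, v) * y z (v, u))) :
    ∀ z : ℝ, 0 < z → ∀ u v : V, G.Adj u v →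
      x z s(u, v) * (1 - x z s(u, v)) / z
        = θ s(u, v) * (1 - incSum G (x z) u) * (1 - incSum G (x z) v) := by
  intro z hz u v huv
  exact (hy z hz).marginal_local_identity hθ (hx z hz) hz huv
end
end

section
/- Let G = (V,E) be a finite simple graph with positive edge weights (θ_e)_{e∈E}. Then the weighted Bethe entropy S^B_G is a concave function on the convex set FM(G). Moreover, if θ_e = 1 for all e ∈ E, then S^B_G(x) ≥ 0 for every x ∈ FM(G). -/
open Finset
open scoped BigOperators Classical

noncomputable section

/-!
Splitting each edge term of `S^B_G` evenly between the two endpoints of the edge writes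
`S^B_G(x)` as the linear form `∑_e x_e ln θ_e` plus a sum over the vertices `v` of
`½ ∑_{e ∋ v} (-x_e ln x_e + (1 - x_e) ln (1 - x_e)) - (1 - s_v) ln (1 - s_v)`,
`s_v = ∑_{e ∋ v} x_e`, a function of the coordinates at `v` alone. Each of these is concave on the
simplex `{x_e ≥ 0, s_v ≤ 1}`. In its interior the second derivative in a direction `h` is
`½ ∑ h_e² (1 / (1 - x_e) - 1 / x_e) - (∑ h_e)² / (1 - s_v)`, in which at most one term of the
sum, the one with `x_e > 1/2`, is positive; it is absorbed by the others through Cauchy–Schwarz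
and the superadditivity of `t (1 - t) / (1 - 2t)` on `[0, 1/2)`. Concavity extends to the
boundary by continuity. A concave function on a simplex is bounded below by its values at the
vertices, which are all `0` here; for unit weights the linear form vanishes, so `S^B_G ≥ 0`.
-/

open Real

lemma concaveOn_of_forall_concaveOn_segment {E : Type*} [AddCommGroup E] [Module ℝ E]
    {s : Set E} {f : E → ℝ} (hs : Convex ℝ s)
    (h : ∀ x ∈ s, ∀ y ∈ s, ConcaveOn ℝ (Set.Icc 0 1) fun τ : ℝ => f (x + τ • (y - x))) :
    ConcaveOn ℝ s f := by
  refine ⟨hs, fun x hx y hy a b ha hb hab => ?_⟩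
  have := (h x hx y hy).2 (Set.left_mem_Icc.2 zero_le_one) (Set.right_mem_Icc.2 zero_le_one)
    ha hb hab
  have hxy : x + b • (y - x) = a • x + b • y := by
    rw [← sub_eq_of_eq_add hab.symm]; module
  simpa [hxy] using this

lemma concaveOn_sum {E κ : Type*} [AddCommGroup E] [Module ℝ E] {s : Set E} {t : Finset κ}
    {f : κ → E → ℝ} (hs : Convex ℝ s) (hf : ∀ k ∈ t, ConcaveOn ℝ s (f k)) :
    ConcaveOn ℝ s fun x => ∑ k ∈ t, f k x := by
  refine ⟨hs, fun x hx y hy a b ha hb hab => ?_⟩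
  simp only [smul_eq_mul, Finset.mul_sum, ← Finset.sum_add_distrib]
  exact Finset.sum_le_sum fun k hk => (hf k hk).2 hx hy ha hb hab

open Filter Topology in
lemma concaveOn_of_continuousOn_of_add_smul_sub_mem {E : Type*} [AddCommGroup E] [Module ℝ E]
    [TopologicalSpace E] [ContinuousAdd E] [ContinuousSMul ℝ E] {s t : Set E} {f : E → ℝ}
    {z : E} (hs : Convex ℝ s) (hf : ContinuousOn f s) (ht : ConcaveOn ℝ t f) (hts : t ⊆ s)
    (hz : ∀ x ∈ s, ∀ τ ∈ Set.Ioc (0 : ℝ) 1, x + τ • (z - x) ∈ t) : ConcaveOn ℝ s f := by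
  have hlim : ∀ w ∈ s, Tendsto (fun τ : ℝ => f (w + τ • (z - w))) (𝓝[>] 0) (𝓝 (f w)) := by
    intro w hw
    have hpath : Tendsto (fun τ : ℝ => w + τ • (z - w)) (𝓝[>] 0) (𝓝 w) := by
      have : Continuous fun τ : ℝ => w + τ • (z - w) := by fun_prop
      simpa using this.continuousWithinAt (s := Set.Ioi 0) (x := 0) |>.tendsto
    refine (hf w hw).tendsto.comp (tendsto_nhdsWithin_iff.2 ⟨hpath, ?_⟩)
    filter_upwards [Ioc_mem_nhdsGT zero_lt_one] with τ hτ using hts (hz w hw τ hτ)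
  refine ⟨hs, fun x hx y hy a b ha hb hab => ?_⟩
  refine le_of_tendsto_of_tendsto (((hlim x hx).const_mul a).add ((hlim y hy).const_mul b))
    (hlim _ (hs hx hy ha hb hab)) ?_
  filter_upwards [Ioc_mem_nhdsGT zero_lt_one] with τ hτ
  have hcomb : a • (x + τ • (z - x)) + b • (y + τ • (z - y))
      = a • x + b • y + τ • (z - (a • x + b • y)) := by
    rw [← sub_eq_of_eq_add hab.symm]; module
  have := ht.2 (hz x hx τ hτ) (hz y hy τ hτ) ha hb hab
  rwa [hcomb] at this

section LocalEntropy

variable {ι : Type*}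

/-- The reciprocal of `1 / t - 1 / (1 - t)`. -/
def invGap (t : ℝ) : ℝ := t * (1 - t) / (1 - 2 * t)

lemma invGap_pos {t : ℝ} (h₀ : 0 < t) (h₁ : t < 1 / 2) : 0 < invGap t :=
  div_pos (mul_pos h₀ (by linarith)) (by linarith)

lemma half_le_invGap {t : ℝ} (h₀ : 0 ≤ t) (h₁ : t < 1 / 2) : t / 2 ≤ invGap t := by
  rw [invGap, le_div_iff₀ (by linarith)]
  nlinarith

lemma invGap_add_invGap_le {a b : ℝ} (ha : 0 ≤ a) (hb : 0 ≤ b) (hab : a + b < 1 / 2) :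
    invGap a + invGap b ≤ invGap (a + b) := by
  unfold invGap
  rw [div_add_div _ _ (by linarith) (by linarith), div_le_div_iff₀ (by nlinarith) (by linarith)]
  nlinarith [mul_nonneg (mul_nonneg ha hb) (show 0 ≤ 1 - a - b by linarith)]

lemma sum_invGap_le (s : Finset ι) {t : ι → ℝ} (h₀ : ∀ i ∈ s, 0 ≤ t i)
    (h₁ : ∑ i ∈ s, t i < 1 / 2) : ∑ i ∈ s, invGap (t i) ≤ invGap (∑ i ∈ s, t i) := by
  induction s using Finset.cons_induction with
  | empty => simp [invGap]
  | cons a s ha ih =>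
    rw [Finset.forall_mem_cons] at h₀
    rw [Finset.sum_cons] at h₁ ⊢
    rw [Finset.sum_cons]
    have hs := Finset.sum_nonneg h₀.2
    linarith [ih h₀.2 (by linarith), invGap_add_invGap_le h₀.1 hs h₁]

lemma sq_div_sub_sq_div_eq_div_invGap (c : ℝ) {t : ℝ} (h₀ : 0 < t) (h₁ : t < 1)
    (h₂ : 2 * t ≠ 1) :
    c ^ 2 / t - c ^ 2 / (1 - t) = c ^ 2 / invGap t := by
  have : 1 - 2 * t ≠ 0 := fun h => h₂ (by linarith)
  have : 1 - t ≠ 0 := by linarith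
  unfold invGap
  field_simp
  ring

lemma sq_div_one_sub_sub_sq_div_le {s : Finset ι} {u : ι → ℝ} (c : ι → ℝ)
    {u₀ : ℝ} (c₀ : ℝ) (hu : ∀ i ∈ s, 0 < u i) (hu₀ : 1 / 2 < u₀)
    (hsum : u₀ + ∑ i ∈ s, u i < 1) :
    c₀ ^ 2 / (1 - u₀) - c₀ ^ 2 / u₀ ≤ ∑ i ∈ s, (c i ^ 2 / u i - c i ^ 2 / (1 - u i))
      + 2 * (c₀ + ∑ i ∈ s, c i) ^ 2 / (1 - (u₀ + ∑ i ∈ s, u i)) := by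
  set σ := ∑ i ∈ s, u i
  set q := 1 - (u₀ + σ)
  set C := c₀ + ∑ i ∈ s, c i
  have hσ : 0 ≤ σ := Finset.sum_nonneg fun i hi => (hu i hi).le
  have hq : 0 < q := by linarith
  have hlight : ∀ i ∈ s, 0 < u i ∧ u i < 1 / 2 := fun i hi =>
    ⟨hu i hi, (Finset.single_le_sum (fun j hj => (hu j hj).le) hi).trans_lt (by linarith)⟩
  have hgap : invGap q + ∑ i ∈ s, invGap (u i) ≤ invGap (1 - u₀) := calc
    _ ≤ invGap q + invGap σ := by
      gcongr; exact sum_invGap_le s (fun i hi => (hu i hi).le) (by linarith)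
    _ ≤ invGap (q + σ) := invGap_add_invGap_le hq.le hσ (by linarith)
    _ = invGap (1 - u₀) := by congr 1; linarith
  -- Sedrakyan's lemma for the family `C, -c i` with weights `invGap q, invGap (u i)`.
  have titu := Finset.sq_sum_div_le_sum_sq_div (Finset.insertNone s)
    (fun j => Option.elim j C fun i => -c i)
    (g := fun j => Option.elim j (invGap q) fun i => invGap (u i))
    (Finset.forall_mem_insertNone.2
      ⟨invGap_pos hq (by linarith), fun i hi => invGap_pos (hlight i hi).1 (hlight i hi).2⟩)
  simp only [Finset.sum_insertNone, Option.elim, Finset.sum_neg_distrib, neg_sq] at titu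
  have hlight_eq : ∀ i ∈ s, c i ^ 2 / u i - c i ^ 2 / (1 - u i) = c i ^ 2 / invGap (u i) :=
    fun i hi => sq_div_sub_sq_div_eq_div_invGap _ (hlight i hi).1 (by linarith [hlight i hi])
      (by linarith [hlight i hi])
  rw [Finset.sum_congr rfl hlight_eq]
  calc c₀ ^ 2 / (1 - u₀) - c₀ ^ 2 / u₀ = c₀ ^ 2 / invGap (1 - u₀) := by
        simpa using sq_div_sub_sq_div_eq_div_invGap c₀ (t := 1 - u₀) (by linarith) (by linarith)
          (by linarith)
    _ ≤ c₀ ^ 2 / (invGap q + ∑ i ∈ s, invGap (u i)) := by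
        gcongr
        exact add_pos_of_pos_of_nonneg (invGap_pos hq (by linarith))
          (Finset.sum_nonneg fun i hi => (invGap_pos (hlight i hi).1 (hlight i hi).2).le)
    _ = (C + -∑ i ∈ s, c i) ^ 2 / (invGap q + ∑ i ∈ s, invGap (u i)) := by
        rw [add_neg_cancel_right]
    _ ≤ C ^ 2 / invGap q + ∑ i ∈ s, c i ^ 2 / invGap (u i) := titu
    _ ≤ ∑ i ∈ s, c i ^ 2 / invGap (u i) + 2 * C ^ 2 / q := by
        have : C ^ 2 / invGap q ≤ C ^ 2 / (q / 2) :=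
          div_le_div_of_nonneg_left (sq_nonneg C) (by positivity)
            (half_le_invGap hq.le (by linarith))
        linarith [show C ^ 2 / (q / 2) = 2 * C ^ 2 / q by field_simp]

/-- The second derivative of `localBetheEntropy s` at `u` in the direction `c` is `≤ 0`. -/
theorem sum_sq_div_one_sub_le (s : Finset ι) {u : ι → ℝ} (c : ι → ℝ)
    (hu : ∀ i ∈ s, 0 < u i) (hs : ∑ i ∈ s, u i < 1) :
    ∑ i ∈ s, c i ^ 2 / (1 - u i)
      ≤ ∑ i ∈ s, c i ^ 2 / u i + 2 * (∑ i ∈ s, c i) ^ 2 / (1 - ∑ i ∈ s, u i) := by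
  by_cases hheavy : ∃ i₀ ∈ s, 1 / 2 < u i₀
  · obtain ⟨i₀, hi₀, hheavy⟩ := hheavy
    rw [← Finset.add_sum_erase s _ hi₀, ← Finset.add_sum_erase s _ hi₀,
      ← Finset.add_sum_erase s _ hi₀, ← Finset.add_sum_erase s _ hi₀] at *
    have := sq_div_one_sub_sub_sq_div_le c (c i₀) (fun i hi => hu i (Finset.mem_of_mem_erase hi))
      hheavy hs
    rw [Finset.sum_sub_distrib] at this
    linarith
  · push Not at hheavy
    have hterm : ∀ i ∈ s, c i ^ 2 / (1 - u i) ≤ c i ^ 2 / u i := fun i hi =>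
      div_le_div_of_nonneg_left (sq_nonneg _) (hu i hi) (by linarith [hheavy i hi])
    have : 0 ≤ 2 * (∑ i ∈ s, c i) ^ 2 / (1 - ∑ i ∈ s, u i) :=
      div_nonneg (by positivity) (by linarith)
    linarith [Finset.sum_le_sum hterm]

section Affine

variable {a b τ : ℝ}

lemma hasDerivAt_negMulLog_affine (h : a + τ * b ≠ 0) :
    HasDerivAt (fun t => negMulLog (a + t * b)) (b * (-log (a + τ * b) - 1)) τ := by
  have := (hasDerivAt_negMulLog h).comp τ (((hasDerivAt_id τ).mul_const b).const_add a)
  exact this.congr_deriv (by ring)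

lemma hasDerivAt_negMulLog_one_sub_affine (h : 1 - (a + τ * b) ≠ 0) :
    HasDerivAt (fun t => negMulLog (1 - (a + t * b))) (b * (log (1 - (a + τ * b)) + 1)) τ := by
  have := (hasDerivAt_negMulLog h).comp τ
    ((((hasDerivAt_id τ).mul_const b).const_add a).const_sub 1)
  exact this.congr_deriv (by ring)

lemma hasDerivAt_mul_neg_log_affine (h : a + τ * b ≠ 0) :
    HasDerivAt (fun t => b * (-log (a + t * b) - 1)) (-(b ^ 2 / (a + τ * b))) τ := by
  have := (((hasDerivAt_log h).comp τ
    (((hasDerivAt_id τ).mul_const b).const_add a)).neg.sub_const 1).const_mul b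
  exact this.congr_deriv (by field_simp)

lemma hasDerivAt_mul_log_one_sub_affine (h : 1 - (a + τ * b) ≠ 0) :
    HasDerivAt (fun t => b * (log (1 - (a + t * b)) + 1)) (-(b ^ 2 / (1 - (a + τ * b)))) τ := by
  have := (((hasDerivAt_log h).comp τ
    ((((hasDerivAt_id τ).mul_const b).const_add a).const_sub 1)).add_const 1).const_mul b
  exact this.congr_deriv (by field_simp)

end Affine

/-- The part of the Bethe entropy at a vertex whose incident edges are `s`, each edge term being
shared evenly by its two endpoints. -/
def localBetheEntropy (s : Finset ι) (x : ι → ℝ) : ℝ :=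
  (∑ i ∈ s, (negMulLog (x i) - negMulLog (1 - x i))) / 2 + negMulLog (1 - ∑ i ∈ s, x i)

def openLocalSimplex (s : Finset ι) : Set (ι → ℝ) :=
  {x | (∀ i ∈ s, 0 < x i) ∧ ∑ i ∈ s, x i < 1}

def localSimplex (s : Finset ι) : Set (ι → ℝ) :=
  {x | (∀ i ∈ s, 0 ≤ x i) ∧ ∑ i ∈ s, x i ≤ 1}

lemma convex_openLocalSimplex (s : Finset ι) : Convex ℝ (openLocalSimplex s) := by
  rintro x ⟨hx₀, hx₁⟩ y ⟨hy₀, hy₁⟩ a b ha hb hab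
  refine ⟨fun i hi => ?_, ?_⟩
  · simpa using (convex_Ioi (0 : ℝ)) (hx₀ i hi) (hy₀ i hi) ha hb hab
  · simpa [Finset.sum_add_distrib, ← Finset.mul_sum] using (convex_Iio (1 : ℝ)) hx₁ hy₁ ha hb hab

lemma localBetheEntropy_add_smul (s : Finset ι) (x d : ι → ℝ) (τ : ℝ) :
    localBetheEntropy s (x + τ • d) =
      (∑ i ∈ s, (negMulLog (x i + τ * d i) - negMulLog (1 - (x i + τ * d i)))) / 2
        + negMulLog (1 - (∑ i ∈ s, x i + τ * ∑ i ∈ s, d i)) := by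
  simp only [localBetheEntropy, Pi.add_apply, Pi.smul_apply, smul_eq_mul, Finset.sum_add_distrib,
    ← Finset.mul_sum]

lemma lt_one_of_mem_openLocalSimplex {s : Finset ι} {x : ι → ℝ} (hx : x ∈ openLocalSimplex s)
    {i : ι} (hi : i ∈ s) : x i < 1 :=
  (Finset.single_le_sum (fun j hj => (hx.1 j hj).le) hi).trans_lt hx.2

lemma concaveOn_localBetheEntropy_segment {s : Finset ι} {x d : ι → ℝ}
    (hseg : ∀ τ ∈ Set.Icc (0 : ℝ) 1, x + τ • d ∈ openLocalSimplex s) :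
    ConcaveOn ℝ (Set.Icc 0 1) fun τ : ℝ => localBetheEntropy s (x + τ • d) := by
  set X := ∑ i ∈ s, x i
  set D := ∑ i ∈ s, d i
  have hne : ∀ τ ∈ Set.Icc (0 : ℝ) 1, (∀ i ∈ s, x i + τ * d i ≠ 0) ∧
      (∀ i ∈ s, 1 - (x i + τ * d i) ≠ 0) ∧ 1 - (X + τ * D) ≠ 0 := fun τ hτ => by
    have hsum := (hseg τ hτ).2
    simp only [Pi.add_apply, Pi.smul_apply, smul_eq_mul, Finset.sum_add_distrib,
      ← Finset.mul_sum] at hsum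
    exact ⟨fun i hi => ((hseg τ hτ).1 i hi).ne',
      fun i hi => (sub_pos.2 (lt_one_of_mem_openLocalSimplex (hseg τ hτ) hi)).ne',
      (sub_pos.2 hsum).ne'⟩
  have hd₁ : ∀ τ ∈ Set.Icc (0 : ℝ) 1, HasDerivAt (fun t => localBetheEntropy s (x + t • d))
      ((∑ i ∈ s, (d i * (-log (x i + τ * d i) - 1) - d i * (log (1 - (x i + τ * d i)) + 1))) / 2
        + D * (log (1 - (X + τ * D)) + 1)) τ := fun τ hτ => by
    simp_rw [localBetheEntropy_add_smul]
    exact ((HasDerivAt.fun_sum fun i hi => (hasDerivAt_negMulLog_affine ((hne τ hτ).1 i hi)).sub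
      (hasDerivAt_negMulLog_one_sub_affine ((hne τ hτ).2.1 i hi))).div_const 2).add
      (hasDerivAt_negMulLog_one_sub_affine (hne τ hτ).2.2)
  have hd₂ : ∀ τ ∈ Set.Icc (0 : ℝ) 1, HasDerivAt (fun t =>
      (∑ i ∈ s, (d i * (-log (x i + t * d i) - 1) - d i * (log (1 - (x i + t * d i)) + 1))) / 2
        + D * (log (1 - (X + t * D)) + 1))
      ((∑ i ∈ s, (-(d i ^ 2 / (x i + τ * d i)) - -(d i ^ 2 / (1 - (x i + τ * d i))))) / 2
        + -(D ^ 2 / (1 - (X + τ * D)))) τ := fun τ hτ =>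
    ((HasDerivAt.fun_sum fun i hi => (hasDerivAt_mul_neg_log_affine ((hne τ hτ).1 i hi)).sub
      (hasDerivAt_mul_log_one_sub_affine ((hne τ hτ).2.1 i hi))).div_const 2).add
      (hasDerivAt_mul_log_one_sub_affine (hne τ hτ).2.2)
  refine concaveOn_of_hasDerivWithinAt2_nonpos (convex_Icc 0 1)
    (fun τ hτ => (hd₁ τ hτ).continuousAt.continuousWithinAt)
    (fun τ hτ => (hd₁ τ (interior_subset hτ)).hasDerivWithinAt)
    (fun τ hτ => (hd₂ τ (interior_subset hτ)).hasDerivWithinAt) fun τ hτ => ?_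
  obtain ⟨hpos, hsum⟩ := hseg τ (interior_subset hτ)
  simp only [Pi.add_apply, Pi.smul_apply, smul_eq_mul] at hpos hsum
  have hessian := sum_sq_div_one_sub_le s d hpos hsum
  rw [Finset.sum_add_distrib, ← Finset.mul_sum, mul_div_assoc] at hessian
  simp only [sub_neg_eq_add, Finset.sum_add_distrib, Finset.sum_neg_distrib]
  linarith

theorem concaveOn_localBetheEntropy_openLocalSimplex (s : Finset ι) :
    ConcaveOn ℝ (openLocalSimplex s) (localBetheEntropy s) :=
  concaveOn_of_forall_concaveOn_segment (convex_openLocalSimplex s) fun x hx y hy =>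
    concaveOn_localBetheEntropy_segment fun τ hτ => by
      convert convex_openLocalSimplex s hx hy (sub_nonneg.2 hτ.2) hτ.1 (sub_add_cancel 1 τ)
        using 1
      module

lemma convex_localSimplex (s : Finset ι) : Convex ℝ (localSimplex s) := by
  rintro x ⟨hx₀, hx₁⟩ y ⟨hy₀, hy₁⟩ a b ha hb hab
  refine ⟨fun i hi => ?_, ?_⟩
  · simpa using (convex_Ici (0 : ℝ)) (hx₀ i hi) (hy₀ i hi) ha hb hab
  · simpa [Finset.sum_add_distrib, ← Finset.mul_sum] using (convex_Iic (1 : ℝ)) hx₁ hy₁ ha hb hab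

lemma openLocalSimplex_subset_localSimplex (s : Finset ι) :
    openLocalSimplex s ⊆ localSimplex s :=
  fun _ hx => ⟨fun i hi => (hx.1 i hi).le, hx.2.le⟩

lemma continuous_localBetheEntropy (s : Finset ι) : Continuous (localBetheEntropy s) := by
  unfold localBetheEntropy
  fun_prop

lemma add_smul_sub_mem_openLocalSimplex {s : Finset ι} {x : ι → ℝ} (hx : x ∈ localSimplex s)
    {τ : ℝ} (hτ : τ ∈ Set.Ioc (0 : ℝ) 1) :
    x + τ • ((fun _ => 1 / (#s + 1 : ℝ)) - x) ∈ openLocalSimplex s := by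
  obtain ⟨hx₀, hx₁⟩ := hx
  obtain ⟨hτ₀, hτ₁⟩ := hτ
  have hc : 0 < 1 / (#s + 1 : ℝ) := by positivity
  refine ⟨fun i hi => ?_, ?_⟩
  · simp only [Pi.add_apply, Pi.smul_apply, Pi.sub_apply, smul_eq_mul]
    nlinarith [hx₀ i hi]
  · have hcard : #s * (1 / (#s + 1 : ℝ)) < 1 := by
      rw [mul_one_div, div_lt_one (by positivity)]; linarith
    simp only [Pi.add_apply, Pi.smul_apply, Pi.sub_apply, smul_eq_mul, Finset.sum_add_distrib,
      ← Finset.mul_sum, Finset.sum_sub_distrib, Finset.sum_const, nsmul_eq_mul]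
    nlinarith

theorem concaveOn_localBetheEntropy (s : Finset ι) :
    ConcaveOn ℝ (localSimplex s) (localBetheEntropy s) :=
  concaveOn_of_continuousOn_of_add_smul_sub_mem (convex_localSimplex s)
    (continuous_localBetheEntropy s).continuousOn (concaveOn_localBetheEntropy_openLocalSimplex s)
    (openLocalSimplex_subset_localSimplex s) fun _ hx _ hτ =>
      add_smul_sub_mem_openLocalSimplex hx hτ

lemma localBetheEntropy_congr {s : Finset ι} {x y : ι → ℝ} (h : ∀ i ∈ s, x i = y i) :
    localBetheEntropy s x = localBetheEntropy s y := by
  unfold localBetheEntropy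
  rw [Finset.sum_congr rfl h, Finset.sum_congr rfl fun i hi => by rw [h i hi]]

/-- Jensen's inequality for the vertices `0` and `Pi.single i 1` of the simplex, at which
`localBetheEntropy s` vanishes. -/
theorem localBetheEntropy_nonneg {s : Finset ι} {x : ι → ℝ} (hx : x ∈ localSimplex s) :
    0 ≤ localBetheEntropy s x := by
  have hvert : ∀ i ∈ s, localBetheEntropy s (Pi.single i 1) = 0 := by
    intro i hi
    simp [localBetheEntropy, Pi.single_apply, apply_ite, hi]
  have hjensen := (concaveOn_localBetheEntropy s).map_add_sum_le (t := s) (w := x)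
    (p := fun i => Pi.single i 1) (v := 1 - ∑ i ∈ s, x i) (q := 0) hx.1 (by ring)
    (fun i hi => ⟨fun j _ => by rw [Pi.single_apply]; split_ifs <;> norm_num, by simp [hi]⟩)
    (sub_nonneg.2 hx.2) ⟨fun _ _ => le_rfl, by simp⟩
  have hcomb : localBetheEntropy s ((1 - ∑ i ∈ s, x i) • 0 + ∑ i ∈ s, x i • Pi.single i 1)
      = localBetheEntropy s x :=
    localBetheEntropy_congr fun j hj => by simp [Pi.single_apply, hj]
  have hvert_sum : ∑ i ∈ s, x i • localBetheEntropy s (Pi.single i 1) = 0 :=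
    Finset.sum_eq_zero fun i hi => by rw [hvert i hi, smul_zero]
  rw [hcomb, hvert_sum] at hjensen
  simpa [localBetheEntropy] using hjensen

end LocalEntropy

section Graph

variable {V : Type*} [Fintype V] (G : SimpleGraph V)

def incidentEdges (v : V) : Finset (Sym2 V) := (edgeFS G).filter (fun e => v ∈ e)

lemma mem_edgeFS {e : Sym2 V} : e ∈ edgeFS G ↔ e ∈ G.edgeSet := Set.Finite.mem_toFinset _

lemma sum_sum_incidentEdges (F : Sym2 V → ℝ) :
    ∑ v, ∑ e ∈ incidentEdges G v, F e = 2 * ∑ e ∈ edgeFS G, F e := by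
  simp only [incidentEdges, Finset.sum_filter]
  rw [Finset.sum_comm, Finset.mul_sum]
  refine Finset.sum_congr rfl fun e he => ?_
  rw [← Finset.sum_filter, Finset.sum_const, nsmul_eq_mul]
  have : Finset.univ.filter (fun v => v ∈ e) = e.toFinset := by ext; simp
  rw [this, Sym2.card_toFinset_of_not_isDiag e
    (G.not_isDiag_of_mem_edgeSet ((mem_edgeFS G).1 he))]
  norm_num

variable {G}

lemma memFM.mem_localSimplex {x : Sym2 V → ℝ} (hx : memFM G x) (v : V) :
    x ∈ localSimplex (incidentEdges G v) :=
  ⟨fun e he => hx.1 e (Finset.mem_filter.1 he).1, hx.2 v⟩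

variable (G)

lemma convex_memFM : Convex ℝ {x : Sym2 V → ℝ | memFM G x} := by
  rintro x ⟨hx₀, hx₁⟩ y ⟨hy₀, hy₁⟩ a b ha hb hab
  refine ⟨fun e he => ?_, fun v => ?_⟩
  · simpa using (convex_Ici (0 : ℝ)) (hx₀ e he) (hy₀ e he) ha hb hab
  · simpa [incSum, Finset.sum_add_distrib, ← Finset.mul_sum] using
      (convex_Iic (1 : ℝ)) (hx₁ v) (hy₁ v) ha hb hab

lemma SBW_eq_sum_localBetheEntropy {θ : Sym2 V → ℝ} (hθ : ∀ e ∈ G.edgeSet, θ e ≠ 0)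
    (x : Sym2 V → ℝ) : SBW G θ x = ∑ e ∈ edgeFS G, x e * log (θ e)
      + ∑ v, localBetheEntropy (incidentEdges G v) x := by
  have hedge : ∀ e ∈ edgeFS G, x e * log (θ e / x e) + (1 - x e) * log (1 - x e)
      = x e * log (θ e) + (negMulLog (x e) - negMulLog (1 - x e)) := fun e he => by
    rcases eq_or_ne (x e) 0 with h | h
    · simp [h]
    · rw [log_div (hθ e ((mem_edgeFS G).1 he)) h, negMulLog, negMulLog]; ring
  rw [SBW, Finset.sum_congr rfl hedge, Finset.sum_add_distrib]
  simp only [localBetheEntropy, Finset.sum_add_distrib, ← Finset.sum_div, sum_sum_incidentEdges]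
  simp only [negMulLog, incSum, incidentEdges, neg_mul, Finset.sum_neg_distrib]
  ring

end Graph

/-- The weighted Bethe entropy is concave on the fractional matching
polytope; for unit weights it is also nonnegative there. -/
theorem bethe_entropy_concave_nonneg {V : Type*} [Fintype V] (G : SimpleGraph V)
    (θ : Sym2 V → ℝ) (hθ : ∀ e ∈ G.edgeSet, 0 < θ e) :
    ConcaveOn ℝ {x : Sym2 V → ℝ | memFM G x} (SBW G θ) ∧
    ((∀ e ∈ G.edgeSet, θ e = 1) →
      ∀ x : Sym2 V → ℝ, memFM G x → 0 ≤ SBW G θ x) := by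
  have hSBW := SBW_eq_sum_localBetheEntropy G fun e he => (hθ e he).ne'
  refine ⟨?_, fun hθ₁ x hx => ?_⟩
  · have hlinear : ConcaveOn ℝ {x : Sym2 V → ℝ | memFM G x}
        fun x => ∑ e ∈ edgeFS G, x e * log (θ e) :=
      concaveOn_sum (convex_memFM G) fun e _ =>
        ((LinearMap.proj (R := ℝ) (φ := fun _ => ℝ) e).smulRight (log (θ e))).concaveOn
          (convex_memFM G)
    have hlocal : ConcaveOn ℝ {x : Sym2 V → ℝ | memFM G x}
        fun x => ∑ v, localBetheEntropy (incidentEdges G v) x :=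
      concaveOn_sum (convex_memFM G) fun v _ => (concaveOn_localBetheEntropy _).subset
        (fun _ hx => memFM.mem_localSimplex hx v) (convex_memFM G)
    exact (hlinear.add hlocal).congr fun x _ => (hSBW x).symm
  · have hlinear : ∑ e ∈ edgeFS G, x e * log (θ e) = 0 := Finset.sum_eq_zero fun e he => by
      rw [hθ₁ e ((mem_edgeFS G).1 he), log_one, mul_zero]
    rw [hSBW, hlinear, zero_add]
    exact Finset.sum_nonneg fun v _ => localBetheEntropy_nonneg (hx.mem_localSimplex v)
end
end
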